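/- arXiv:2412.01022 — 2 statements merged into one kernel-verified Lean document; each statement's English description precedes it below -/
import Mathlib

section
/- Let E ⊆ ℝⁿ (n ≥ 2) be a closed set with nonempty interior. If E is weakly 1-semiconvex (i.e., E can be approximated from the outside by a family of open weakly 1-semiconvex sets), then the interior of E is weakly 1-semiconvex (i.e., through every boundary point of Int E there passes a closed ray not intersecting Int E). -/
open Set Metric

/-- The closed ray with endpoint `x` in direction `α`. -/
def ray {n : ℕ} (x α : EuclideanSpace ℝ (Fin n)) : Set (EuclideanSpace ℝ (Fin n)) :=
  {z | ∃ t : ℝ, 0 ≤ t ∧ z = x + t • α}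

/-- The straight line through `x` in direction `α`. -/
def line {n : ℕ} (x α : EuclideanSpace ℝ (Fin n)) : Set (EuclideanSpace ℝ (Fin n)) :=
  {z | ∃ t : ℝ, z = x + t • α}

/-- The set `E^◇` of 1-nonsemiconvexity points of `E`. -/
def diamond {n : ℕ} (E : Set (EuclideanSpace ℝ (Fin n))) : Set (EuclideanSpace ℝ (Fin n)) :=
  {x | x ∉ E ∧ ∀ α : EuclideanSpace ℝ (Fin n), ‖α‖ = 1 → (ray x α ∩ E).Nonempty}

/-- The set `E^△` of 1-nonconvexity points of `E`. -/
def triangle {n : ℕ} (E : Set (EuclideanSpace ℝ (Fin n))) : Set (EuclideanSpace ℝ (Fin n)) :=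
  {x | x ∉ E ∧ ∀ α : EuclideanSpace ℝ (Fin n), ‖α‖ = 1 → (line x α ∩ E).Nonempty}

/-- An (open) set is weakly 1-semiconvex if through every boundary point
there passes a closed ray missing the set. -/
def WeaklySemiconvex {n : ℕ} (E : Set (EuclideanSpace ℝ (Fin n))) : Prop :=
  ∀ x ∈ frontier E, ∃ α : EuclideanSpace ℝ (Fin n), ‖α‖ = 1 ∧ ray x α ∩ E = ∅

/-- An (open) set is weakly 1-convex if through every boundary point
there passes a straight line missing the set. -/
def WeaklyConvex {n : ℕ} (E : Set (EuclideanSpace ℝ (Fin n))) : Prop :=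
  ∀ x ∈ frontier E, ∃ α : EuclideanSpace ℝ (Fin n), ‖α‖ = 1 ∧ line x α ∩ E = ∅

/-!
Suppose every unit ray from a boundary point `x` of `int E` meets `int E`. Meeting an open set
is an open condition on the pair (endpoint, direction), so by compactness of the unit sphere the
same holds for every endpoint in a small ball `B` around `x`. Since `int E ⊆ G k`, no point of `B`
can then lie on the frontier of the weakly 1-semiconvex set `G k`; as `B` is connected and meets
`int E ⊆ G k`, it follows that `B ⊆ G k` for every `k`, i.e. `B ⊆ E`, so `x ∈ int E`.
-/

open Filter Topology

theorem IsPreconnected.subset_of_disjoint_frontier {X : Type*} [TopologicalSpace X]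
    {s u : Set X} (hs : IsPreconnected s) (hsu : (s ∩ u).Nonempty)
    (hfr : Disjoint s (frontier u)) : s ⊆ u := by
  have hcover : s ⊆ interior u ∪ (closure u)ᶜ := by
    intro y hy
    by_cases hyu : y ∈ closure u
    · exact Or.inl (by_contra fun hyi => disjoint_left.1 hfr hy ⟨hyu, hyi⟩)
    · exact Or.inr hyu
  have hsi : (s ∩ interior u).Nonempty := by
    obtain ⟨y, hys, hyu⟩ := hsu
    exact ⟨y, hys, (hcover hys).resolve_right (not_not.2 (subset_closure hyu))⟩
  exact (hs.subset_left_of_subset_union isOpen_interior isClosed_closure.isOpen_compl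
    (disjoint_compl_right.mono_left interior_subset_closure) hcover hsi).trans interior_subset

section

variable {n : ℕ}

theorem isOpen_setOf_ray_inter_nonempty {U : Set (EuclideanSpace ℝ (Fin n))} (hU : IsOpen U) :
    IsOpen {p : EuclideanSpace ℝ (Fin n) × EuclideanSpace ℝ (Fin n) |
      (ray p.1 p.2 ∩ U).Nonempty} := by
  have hunion : {p : EuclideanSpace ℝ (Fin n) × EuclideanSpace ℝ (Fin n) |
      (ray p.1 p.2 ∩ U).Nonempty} = ⋃ t ∈ Ici (0 : ℝ), (fun p => p.1 + t • p.2) ⁻¹' U := by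
    ext p
    simp [ray, Set.Nonempty]
  rw [hunion]
  exact isOpen_biUnion fun t _ => hU.preimage (by fun_prop)

theorem eventually_forall_ray_inter_nonempty {U : Set (EuclideanSpace ℝ (Fin n))}
    (hU : IsOpen U) {x : EuclideanSpace ℝ (Fin n)}
    (hx : ∀ α : EuclideanSpace ℝ (Fin n), ‖α‖ = 1 → (ray x α ∩ U).Nonempty) :
    ∀ᶠ y in 𝓝 x, ∀ α : EuclideanSpace ℝ (Fin n), ‖α‖ = 1 → (ray y α ∩ U).Nonempty := by
  have htube := (isCompact_sphere (0 : EuclideanSpace ℝ (Fin n)) 1)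
    |>.eventually_forall_of_forall_eventually (P := fun y α => (ray y α ∩ U).Nonempty)
      fun α hα => (isOpen_setOf_ray_inter_nonempty hU).mem_nhds (hx α (by simpa using hα))
  filter_upwards [htube] with y hy α hα using hy α (by simpa using hα)

theorem WeaklySemiconvex.subset_of_forall_ray_inter_nonempty
    {G s : Set (EuclideanSpace ℝ (Fin n))} (hG : WeaklySemiconvex G) (hs : IsPreconnected s)
    (hsG : (s ∩ G).Nonempty)
    (hrays : ∀ y ∈ s, ∀ α : EuclideanSpace ℝ (Fin n), ‖α‖ = 1 → (ray y α ∩ G).Nonempty) :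
    s ⊆ G :=
  hs.subset_of_disjoint_frontier hsG <| disjoint_left.2 fun y hys hyfr =>
    let ⟨α, hα, hmiss⟩ := hG y hyfr
    (hrays y hys α hα).ne_empty hmiss

end

theorem interior_weaklySemiconvex_general {n : ℕ} (E : Set (EuclideanSpace ℝ (Fin n)))
    (G : ℕ → Set (EuclideanSpace ℝ (Fin n)))
    (hGws : ∀ k, WeaklySemiconvex (G k)) (hGE : E = ⋂ k, G k) :
    WeaklySemiconvex (interior E) := by
  intro x hx
  by_contra! hrays
  obtain ⟨r, hr, hball⟩ := eventually_nhds_iff_ball.1 <|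
    eventually_forall_ray_inter_nonempty isOpen_interior hrays
  have hintG : ∀ k, interior E ⊆ G k := fun k =>
    interior_subset.trans (hGE ▸ iInter_subset G k)
  obtain ⟨w, hwE, hwx⟩ := Metric.mem_closure_iff.1 hx.1 r hr
  have hballE : ball x r ⊆ E := hGE ▸ subset_iInter fun k =>
    (hGws k).subset_of_forall_ray_inter_nonempty (convex_ball x r).isPreconnected
      ⟨w, mem_ball'.2 hwx, hintG k hwE⟩
      fun y hy α hα => (hball y hy α hα).mono (inter_subset_inter_right _ (hintG k))
  refine hx.2 ?_
  rw [interior_interior]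
  exact mem_interior.2 ⟨ball x r, hballE, isOpen_ball, mem_ball_self hr⟩

theorem interior_weaklySemiconvex {n : ℕ} (hn : 2 ≤ n) (E : Set (EuclideanSpace ℝ (Fin n)))
    (hcl : IsClosed E) (hint : (interior E).Nonempty)
    (G : ℕ → Set (EuclideanSpace ℝ (Fin n)))
    (hGopen : ∀ k, IsOpen (G k)) (hGws : ∀ k, WeaklySemiconvex (G k))
    (hGnest : ∀ k, closure (G (k + 1)) ⊆ G k) (hGE : E = ⋂ k, G k) :
    WeaklySemiconvex (interior E) :=
  interior_weaklySemiconvex_general E G hGws hGE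
end

section
/- Let D ⊆ ℝ² be an open bounded convex set, P an open convex polygon with closure(P) ⊆ D, and let γ¹, …, γᵏ be the straight lines containing the sides of P. Then the set E := (D \ closure(P)) \ (γ¹ ∪ … ∪ γᵏ) is open, weakly 1-convex and weakly 1-semiconvex, and E^◇ = E^△ = P. -/
open Set Metric

/-!
A point outside both `E` and `P` lies on a line missing `E`: if it is on a side line `γⁱ`, take
`γⁱ` itself; if it is outside `D`, take a line supporting the convex set `D`; otherwise it would
lie in `closure P` but on no `γⁱ`, hence in `P`. Since the open set `P` misses `frontier E`, this
gives weak 1-convexity and `E^△ ⊆ P`. Conversely, a ray from a point of `P` leaves the bounded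
closed set `closure P` at a last time, still inside the open set `D`; just beyond it, all but
finitely many points of the ray avoid the lines `γⁱ`, so they lie in `E`. Hence
`P ⊆ E^◇ ⊆ E^△`.
-/

open Module

section Lines

variable {n : ℕ}

lemma ray_subset_line (x α : EuclideanSpace ℝ (Fin n)) : ray x α ⊆ line x α :=
  fun _ ⟨t, _, hz⟩ => ⟨t, hz⟩

lemma WeaklyConvex.weaklySemiconvex {E : Set (EuclideanSpace ℝ (Fin n))} (h : WeaklyConvex E) :
    WeaklySemiconvex E := fun x hx =>
  let ⟨α, hα, hline⟩ := h x hx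
  ⟨α, hα, subset_empty_iff.1 (hline ▸ inter_subset_inter_left E (ray_subset_line x α))⟩

lemma diamond_subset_triangle (E : Set (EuclideanSpace ℝ (Fin n))) : diamond E ⊆ triangle E :=
  fun _ ⟨hxE, hray⟩ => ⟨hxE, fun α hα =>
    (hray α hα).mono (inter_subset_inter_left E (ray_subset_line _ α))⟩

lemma notMem_triangle_of_line_inter_eq_empty {E : Set (EuclideanSpace ℝ (Fin n))}
    {x α : EuclideanSpace ℝ (Fin n)} (hα : ‖α‖ = 1) (hline : line x α ∩ E = ∅) :
    x ∉ triangle E := fun hx => (hx.2 α hα).ne_empty hline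

end Lines

lemma exists_norm_eq_one_map_eq_zero {V : Type*} [NormedAddCommGroup V] [NormedSpace ℝ V]
    [FiniteDimensional ℝ V] (hV : 2 ≤ finrank ℝ V) (g : V →ₗ[ℝ] ℝ) :
    ∃ α : V, ‖α‖ = 1 ∧ g α = 0 := by
  obtain ⟨v, hv, hv0⟩ := Submodule.exists_mem_ne_zero_of_ne_bot
    (g.ker_ne_bot_of_finrank_lt (by rw [finrank_self]; omega))
  exact ⟨‖v‖⁻¹ • v, norm_smul_inv_norm hv0, by simp [LinearMap.mem_ker.1 hv]⟩

lemma exists_line_inter_eq_empty_of_map_ne {n : ℕ} (hn : 2 ≤ n)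
    (g : EuclideanSpace ℝ (Fin n) →ₗ[ℝ] ℝ) {S : Set (EuclideanSpace ℝ (Fin n))}
    {x : EuclideanSpace ℝ (Fin n)} (hS : ∀ z ∈ S, g z ≠ g x) :
    ∃ α, ‖α‖ = 1 ∧ line x α ∩ S = ∅ := by
  obtain ⟨α, hα, hgα⟩ := exists_norm_eq_one_map_eq_zero (by simpa using hn) g
  refine ⟨α, hα, eq_empty_iff_forall_notMem.2 ?_⟩
  rintro _ ⟨⟨t, rfl⟩, hz⟩
  exact hS _ hz (by simp [hgα])

lemma subsingleton_setOf_map_add_smul_eq {M : Type*} [AddCommGroup M] [Module ℝ M]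
    (g : M →ₗ[ℝ] ℝ) {x : M} {c : ℝ} (hx : g x ≠ c) (α : M) :
    {t : ℝ | g (x + t • α) = c}.Subsingleton := by
  intro s hs t ht
  simp only [mem_ofPred_eq, map_add, map_smul, smul_eq_mul] at hs ht
  have hgα : g α ≠ 0 := fun h => hx (by simpa [h] using hs)
  exact mul_right_cancel₀ hgα (by linarith)

lemma isometry_add_smul {V : Type*} [NormedAddCommGroup V] [NormedSpace ℝ V] (x : V) {α : V}
    (hα : ‖α‖ = 1) : Isometry fun t : ℝ => x + t • α := by
  refine Isometry.of_dist_eq fun s t => ?_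
  rw [dist_add_left, dist_eq_norm, ← sub_smul, norm_smul, hα, mul_one, dist_eq_norm]

lemma exists_mem_diff_forall_lt {S U B : Set ℝ} (hS : IsClosed S) (hSne : S.Nonempty)
    (hSbdd : BddAbove S) (hU : IsOpen U) (hSU : S ⊆ U) (hB : B.Finite) :
    ∃ t ∈ U \ B, ∀ s ∈ S, s < t := by
  obtain ⟨ε, hε, hball⟩ := Metric.isOpen_iff.1 hU _ (hSU (hS.csSup_mem hSne hSbdd))
  obtain ⟨t, ⟨hsupt, htε⟩, htB⟩ :=
    ((Ioo_infinite (lt_add_of_pos_right (sSup S) hε)).sdiff hB).nonempty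
  refine ⟨t, ⟨hball ?_, htB⟩, fun s hs => (le_csSup hSbdd hs).trans_lt hsupt⟩
  rw [Real.ball_eq_Ioo]
  exact ⟨by linarith, htε⟩

lemma exists_add_smul_mem_diff {V : Type*} [NormedAddCommGroup V] [NormedSpace ℝ V]
    {C D : Set V} (hC : IsClosed C) (hCbdd : Bornology.IsBounded C) (hD : IsOpen D)
    (hCD : C ⊆ D) {x α : V} (hx : x ∈ C) (hα : ‖α‖ = 1) {B : Set ℝ} (hB : B.Finite) :
    ∃ t, 0 ≤ t ∧ t ∉ B ∧ x + t • α ∈ D \ C := by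
  set φ : ℝ → V := fun t => x + t • α
  have hφ : Isometry φ := isometry_add_smul x hα
  have h0 : (0 : ℝ) ∈ Ici 0 ∩ φ ⁻¹' C := ⟨self_mem_Ici, by simpa [φ] using hx⟩
  obtain ⟨t, ⟨htD, htB⟩, hlt⟩ := exists_mem_diff_forall_lt
    (isClosed_Ici.inter (hC.preimage hφ.continuous)) ⟨0, h0⟩
    ((hφ.antilipschitz.isBounded_preimage hCbdd).bddAbove.mono inter_subset_right)
    (hD.preimage hφ.continuous) (inter_subset_right.trans (preimage_mono hCD)) hB
  have ht0 : 0 < t := hlt 0 h0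
  exact ⟨t, ht0.le, htB, htD, fun htC => (hlt t ⟨ht0.le, htC⟩).false⟩

section PolygonCut

variable {n k : ℕ} {D : Set (EuclideanSpace ℝ (Fin n))}
  {f : Fin k → EuclideanSpace ℝ (Fin n) →ₗ[ℝ] ℝ} {c : Fin k → ℝ}

lemma mem_iInter_lt_of_mem_closure {x : EuclideanSpace ℝ (Fin n)}
    (hx : x ∈ closure (⋂ i, {y | f i y < c i})) (hne : ∀ i, f i x ≠ c i) :
    x ∈ ⋂ i, {y | f i y < c i} :=
  mem_iInter.2 fun i => (closure_lt_subset_le (f i).continuous_of_finiteDimensional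
    continuous_const (closure_mono (iInter_subset _ i) hx)).lt_of_ne (hne i)

lemma exists_line_inter_cut_eq_empty (hn : 2 ≤ n) (hD : IsOpen D) (hDconv : Convex ℝ D)
    {x : EuclideanSpace ℝ (Fin n)}
    (hxE : x ∉ (D \ closure (⋂ i, {y | f i y < c i})) \ ⋃ i, {y | f i y = c i})
    (hxP : x ∉ ⋂ i, {y | f i y < c i}) :
    ∃ α, ‖α‖ = 1 ∧ line x α ∩
      ((D \ closure (⋂ i, {y | f i y < c i})) \ ⋃ i, {y | f i y = c i}) = ∅ := by
  by_cases hxD : x ∈ D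
  · by_cases hx : ∃ i, f i x = c i
    · obtain ⟨i, hi⟩ := hx
      exact exists_line_inter_eq_empty_of_map_ne hn (f i) fun z hz hzi =>
        hz.2 (mem_iUnion.2 ⟨i, hzi.trans hi⟩)
    · have hxcl : x ∈ closure (⋂ i, {y | f i y < c i}) :=
        by_contra fun h => hxE ⟨⟨hxD, h⟩, by simpa using hx⟩
      exact absurd (mem_iInter_lt_of_mem_closure hxcl fun i hi => hx ⟨i, hi⟩) hxP
  · obtain ⟨g, hg⟩ := geometric_hahn_banach_open_point hDconv hD hxD
    exact exists_line_inter_eq_empty_of_map_ne hn g.toLinearMap fun z hz => (hg z hz.1.1).ne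

lemma iInter_lt_subset_diamond (hD : IsOpen D)
    (hPbdd : Bornology.IsBounded (⋂ i, {y | f i y < c i}))
    (hPD : closure (⋂ i, {y | f i y < c i}) ⊆ D) :
    ⋂ i, {y | f i y < c i} ⊆
      diamond ((D \ closure (⋂ i, {y | f i y < c i})) \ ⋃ i, {y | f i y = c i}) := by
  intro x hx
  refine ⟨fun hxE => hxE.1.2 (subset_closure hx), fun α hα => ?_⟩
  have hB : (⋃ i, {t : ℝ | f i (x + t • α) = c i}).Finite := finite_iUnion fun i =>
    (subsingleton_setOf_map_add_smul_eq (f i) (mem_iInter.1 hx i).ne α).finite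
  obtain ⟨t, ht0, htB, htD⟩ := exists_add_smul_mem_diff isClosed_closure hPbdd.closure hD hPD
    (subset_closure hx) hα hB
  exact ⟨x + t • α, ⟨t, ht0, rfl⟩, htD, fun h => htB (by simpa using h)⟩

end PolygonCut

theorem polygon_cut_example_general {k : ℕ}
    (D : Set (EuclideanSpace ℝ (Fin 2)))
    (hDopen : IsOpen D) (hDconv : Convex ℝ D)
    (f : Fin k → (EuclideanSpace ℝ (Fin 2) →ₗ[ℝ] ℝ)) (c : Fin k → ℝ)
    (P : Set (EuclideanSpace ℝ (Fin 2)))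
    (hP : P = ⋂ i, {x | f i x < c i})
    (hPbdd : Bornology.IsBounded P)
    (hPD : closure P ⊆ D)
    (E : Set (EuclideanSpace ℝ (Fin 2)))
    (hE : E = (D \ closure P) \ ⋃ i, {x | f i x = c i}) :
    IsOpen E ∧ WeaklyConvex E ∧ WeaklySemiconvex E ∧
      diamond E = P ∧ triangle E = P := by
  subst hP hE
  set P := ⋂ i, {x | f i x < c i}
  set E := (D \ closure P) \ ⋃ i, {x | f i x = c i}
  have hfc : ∀ i, Continuous (f i) := fun i => (f i).continuous_of_finiteDimensional
  have hPopen : IsOpen P := isOpen_iInter_of_finite fun i => isOpen_lt (hfc i) continuous_const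
  have hEopen : IsOpen E := (hDopen.sdiff isClosed_closure).sdiff
    (isClosed_iUnion_of_finite fun i => isClosed_eq (hfc i) continuous_const)
  have hPE : Disjoint P (closure E) :=
    (disjoint_left.2 fun _ hxP hxE => hxE.1.2 (subset_closure hxP)).closure_right hPopen
  have hWC : WeaklyConvex E := fun x hx =>
    exists_line_inter_cut_eq_empty le_rfl hDopen hDconv (hEopen.frontier_eq ▸ hx).2
      fun hxP => hPE.notMem_of_mem_left hxP hx.1
  have htriangle : triangle E ⊆ P := fun x hx => by_contra fun hxP =>
    let ⟨_, hα, hline⟩ := exists_line_inter_cut_eq_empty le_rfl hDopen hDconv hx.1 hxP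
    notMem_triangle_of_line_inter_eq_empty hα hline hx
  have hdiamond : P ⊆ diamond E := iInter_lt_subset_diamond hDopen hPbdd hPD
  exact ⟨hEopen, hWC, hWC.weaklySemiconvex,
    (htriangle.trans' (diamond_subset_triangle E)).antisymm hdiamond,
    htriangle.antisymm (hdiamond.trans (diamond_subset_triangle E))⟩

/-- `P` is an open convex polygon in the plane, presented as a bounded nonempty
intersection of finitely many open half-planes `{x | f i x < c i}`, each of whose
boundary lines `{x | f i x = c i}` contains a side (a nondegenerate segment) of `P`. -/
theorem polygon_cut_example {k : ℕ}
    (D : Set (EuclideanSpace ℝ (Fin 2)))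
    (hDopen : IsOpen D) (hDbdd : Bornology.IsBounded D) (hDconv : Convex ℝ D)
    (f : Fin k → (EuclideanSpace ℝ (Fin 2) →ₗ[ℝ] ℝ)) (c : Fin k → ℝ)
    (hf : ∀ i, f i ≠ 0)
    (P : Set (EuclideanSpace ℝ (Fin 2)))
    (hP : P = ⋂ i, {x | f i x < c i})
    (hPbdd : Bornology.IsBounded P) (hPne : P.Nonempty)
    (hside : ∀ i, ∃ x y : EuclideanSpace ℝ (Fin 2), x ≠ y ∧
      x ∈ closure P ∧ y ∈ closure P ∧ f i x = c i ∧ f i y = c i)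
    (hPD : closure P ⊆ D)
    (E : Set (EuclideanSpace ℝ (Fin 2)))
    (hE : E = (D \ closure P) \ ⋃ i, {x | f i x = c i}) :
    IsOpen E ∧ WeaklyConvex E ∧ WeaklySemiconvex E ∧
      diamond E = P ∧ triangle E = P :=
  polygon_cut_example_general D hDopen hDconv f c P hP hPbdd hPD E hE
end
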